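/- Let J be a complex structure in so(2p,2q) written with respect to the grading as J = [[-J_c, J_η, 0],[j, J_ss, -J J_ηᵀ],[0, -jᵀJ, J_c]] (so J² = -Id). Then the vectors j and -J J_ηᵀ satisfy: g(j,j) = 0, g(J_ηᵀ-dual, itself) = 0, -g(j, (J_η)♯) = 1 + J_c², and in particular j ≠ 0 (j has no zeros as a vector). That is, the projection j of any complex structure in so(2p,2q) to the g₋₁-component is a nonzero lightlike vector. -/
import Mathlib


open Matrix

noncomputable def Jsig (r s : ℕ) : Matrix (Fin (r + s)) (Fin (r + s)) ℝ :=
  Matrix.diagonal fun i => if (i : ℕ) < r then (-1 : ℝ) else 1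

abbrev Idx (n : ℕ) := Unit ⊕ Fin n ⊕ Unit

noncomputable def blockMat {n : ℕ} (J : Matrix (Fin n) (Fin n) ℝ) (a : ℝ)
    (m l : Fin n → ℝ) (A : Matrix (Fin n) (Fin n) ℝ) : Matrix (Idx n) (Idx n) ℝ :=
  Matrix.of fun i j =>
    match i, j with
    | Sum.inl _, Sum.inl _ => -a
    | Sum.inl _, Sum.inr (Sum.inl k) => l k
    | Sum.inl _, Sum.inr (Sum.inr _) => 0
    | Sum.inr (Sum.inl i), Sum.inl _ => m i
    | Sum.inr (Sum.inl i), Sum.inr (Sum.inl k) => A i k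
    | Sum.inr (Sum.inl i), Sum.inr (Sum.inr _) => -(J.mulVec l i)
    | Sum.inr (Sum.inr _), Sum.inl _ => 0
    | Sum.inr (Sum.inr _), Sum.inr (Sum.inl k) => -(Matrix.vecMul m J k)
    | Sum.inr (Sum.inr _), Sum.inr (Sum.inr _) => a

/-- The realization of `g₋₁ ≅ ℝⁿ` inside `so(r+1,s+1)`. -/
noncomputable def matNeg {n : ℕ} (J : Matrix (Fin n) (Fin n) ℝ) (m : Fin n → ℝ) :
    Matrix (Idx n) (Idx n) ℝ := blockMat J 0 m 0 0

/-- The realization of `g₀ ≅ co(r,s) = so(r,s) ⊕ ℝ` inside `so(r+1,s+1)`. -/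
noncomputable def matZero {n : ℕ} (J : Matrix (Fin n) (Fin n) ℝ) (a : ℝ)
    (A : Matrix (Fin n) (Fin n) ℝ) : Matrix (Idx n) (Idx n) ℝ := blockMat J a 0 0 A

/-- The realization of `g₁ ≅ ℝⁿ*` inside `so(r+1,s+1)`. -/
noncomputable def matPos {n : ℕ} (J : Matrix (Fin n) (Fin n) ℝ) (l : Fin n → ℝ) :
    Matrix (Idx n) (Idx n) ℝ := blockMat J 0 0 l 0

/-- Matrix commutator. -/
def mcomm {n : ℕ} (X Y : Matrix (Idx n) (Idx n) ℝ) : Matrix (Idx n) (Idx n) ℝ :=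
  X * Y - Y * X

/-- Gram matrix of the form `⟨x,y⟩ = x₋y₊ + x₊y₋ + xᵀ J y` on `ℝ^{n+2}`. -/
noncomputable def Bform (r s : ℕ) : Matrix (Idx (r + s)) (Idx (r + s)) ℝ :=
  Matrix.of fun i j =>
    match i, j with
    | Sum.inl _, Sum.inr (Sum.inr _) => 1
    | Sum.inr (Sum.inr _), Sum.inl _ => 1
    | Sum.inr (Sum.inl i), Sum.inr (Sum.inl k) => Jsig r s i k
    | _, _ => 0

/-- The Lie algebra `so(r+1,s+1)` in its matrix realization. -/
def soSet (r s : ℕ) : Set (Matrix (Idx (r + s)) (Idx (r + s)) ℝ) :=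
  {X | Xᵀ * Bform r s + Bform r s * X = 0}

/-- Lemma 5.1 applied to a complex structure `J ∈ so(2p,2q)` written in block form
`[[-J_c, J_η, 0],[j, J_ss, -J J_ηᵀ],[0, -jᵀJ, J_c]]`: the projection `j` to the
`g₋₁`-component is lightlike, `J_η` is lightlike, `-g(j, J_η♯) = 1 + J_c²`, and in
particular `j ≠ 0`. -/
theorem stmt16 (p q : ℕ) (hp : 0 < p) (hq : 0 < q)
    (Jc : ℝ) (j Jη : Fin (2 * p - 1 + (2 * q - 1)) → ℝ)
    (Jss : Matrix (Fin (2 * p - 1 + (2 * q - 1))) (Fin (2 * p - 1 + (2 * q - 1))) ℝ)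
    (hso : Jssᵀ * Jsig (2 * p - 1) (2 * q - 1) = -(Jsig (2 * p - 1) (2 * q - 1) * Jss))
    (hJ2 : blockMat (Jsig (2 * p - 1) (2 * q - 1)) Jc j Jη Jss *
        blockMat (Jsig (2 * p - 1) (2 * q - 1)) Jc j Jη Jss = -1) :
    j ⬝ᵥ (Jsig (2 * p - 1) (2 * q - 1)).mulVec j = 0 ∧
    Jη ⬝ᵥ (Jsig (2 * p - 1) (2 * q - 1)).mulVec Jη = 0 ∧
    -(j ⬝ᵥ Jη) = 1 + Jc ^ 2 ∧
    j ≠ 0 := by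
  set S := Jsig (2 * p - 1) (2 * q - 1) with hS
  -- entry (inl, inl): Jc^2 + Jη ⬝ j = -1
  have h1 : Jc * Jc + Jη ⬝ᵥ j = -1 := by
    have := congrFun (congrFun hJ2 (Sum.inl ())) (Sum.inl ())
    simpa [Matrix.mul_apply, Fintype.sum_sum_type, blockMat, dotProduct,
      Matrix.one_apply, mul_comm] using this
  -- entry (inr inr, inl): -(j ᵥ* S) ⬝ j = 0
  have h2 : (Matrix.vecMul j S) ⬝ᵥ j = 0 := by
    have := congrFun (congrFun hJ2 (Sum.inr (Sum.inr ()))) (Sum.inl ())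
    simp [Matrix.mul_apply, Fintype.sum_sum_type, blockMat, Matrix.one_apply] at this
    simpa [dotProduct, neg_mul, Finset.sum_neg_distrib] using this
  -- entry (inl, inr inr): -(Jη ⬝ S Jη) = 0
  have h3 : Jη ⬝ᵥ S.mulVec Jη = 0 := by
    have := congrFun (congrFun hJ2 (Sum.inl ())) (Sum.inr (Sum.inr ()))
    simp [Matrix.mul_apply, Fintype.sum_sum_type, blockMat, Matrix.one_apply] at this
    simpa [dotProduct, mul_neg, Finset.sum_neg_distrib] using this
  have hSsymm : Matrix.vecMul j S = S.mulVec j := by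
    ext i
    simp [hS, Jsig, Matrix.vecMul, Matrix.mulVec, dotProduct,
      Matrix.diagonal, mul_comm]
  have key : -(j ⬝ᵥ Jη) = 1 + Jc ^ 2 := by
    have : Jη ⬝ᵥ j = j ⬝ᵥ Jη := dotProduct_comm _ _
    nlinarith [h1]
  refine ⟨?_, h3, key, ?_⟩
  · rw [← hSsymm]
    rw [dotProduct_comm] at h2
    exact h2
  · intro hj
    rw [hj] at key
    simp at key
    nlinarith [sq_nonneg Jc, key]
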